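/- arXiv:1709.03385 — 9 statements merged into one kernel-verified Lean document; each statement's English description precedes it below -/
import Mathlib

section
/- For every natural number n ≥ 1 there exists a residue r with 0 ≤ r < 2^{σ_n} such that every natural number x > 1 with x ≡ r (mod 2^{σ_n}) has a finite stopping time equal to σ_n. -/
/-- The 3x+1 map: `T x = x/2` if `x` is even, `(3x+1)/2` if `x` is odd. -/
def T (x : ℕ) : ℕ := if x % 2 = 0 then x / 2 else (3 * x + 1) / 2

/-- The stopping time of `x`: the least `s ≥ 1` with `T^[s] x < x`. -/
noncomputable def stoppingTime (x : ℕ) : ℕ := sInf {s : ℕ | 1 ≤ s ∧ T^[s] x < x}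

/-- `σ_n = ⌊1 + (n+1)·log₂ 3⌋`. -/
noncomputable def sigmaN (n : ℕ) : ℕ := ⌊1 + ((n : ℝ) + 1) * Real.logb 2 3⌋₊

/-!
Write `N = n + 1` and `E = σ_n - N`, so that `3^N < 2^(N+E) < 2·3^N`. If `x + 1 = 2^N m` with
`3^N m ≡ 1 (mod 2^E)`, the orbit of `x` makes `N` odd steps, reaching `3^N m - 1 = 2^E t`, and
then `E` even steps, reaching `t`. The bounds on `3^N` keep the orbit at or above `x` before time
`N + E` and give `t ≤ x`, with `t = x` only if `d = 2^(N+E) - 3^N` divides `2^E - 1` (the class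
would then contain a cycle). If that happens, the parity vector `1^(N-1) 0 1 0^(E-1)` is used
instead; it fails only if `d ∣ 2^(E+1) - 1`, and both failures together force
`2^(N+E) = 3^N + 1`, impossible mod 8.
-/

lemma T_two_mul (a : ℕ) : T (2 * a) = a := by
  unfold T; rw [if_pos (by omega)]; omega

lemma T_two_mul_add_one (a : ℕ) : T (2 * a + 1) = 3 * a + 2 := by
  unfold T; rw [if_neg (by omega)]; omega

lemma iterate_T_two_pow_mul (k t : ℕ) : T^[k] (2 ^ k * t) = t := by
  induction k with
  | zero => simp
  | succ k ih => rw [pow_succ', mul_assoc, Function.iterate_succ_apply, T_two_mul, ih]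

lemma iterate_T_of_succ_eq_two_pow_mul {k x m : ℕ} (h : x + 1 = 2 ^ k * m) :
    T^[k] x + 1 = 3 ^ k * m := by
  induction k generalizing x m with
  | zero => simpa using h
  | succ k ih =>
    rw [pow_succ', mul_assoc] at h
    obtain ⟨a, rfl⟩ : ∃ a, x = 2 * a + 1 := ⟨x / 2, by omega⟩
    have ha : 3 * a + 2 + 1 = 2 ^ k * (3 * m) := by rw [mul_left_comm]; omega
    rw [Function.iterate_succ_apply, T_two_mul_add_one, ih ha]
    ring

lemma le_iterate_T_of_succ_eq_two_pow_mul {k s x m : ℕ} (h : x + 1 = 2 ^ k * m) (hs : s ≤ k) :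
    x ≤ T^[s] x := by
  have h' : x + 1 = 2 ^ s * (2 ^ (k - s) * m) := by
    rw [← mul_assoc, ← pow_add, Nat.add_sub_cancel' hs, h]
  have hmono : 2 ^ s * (2 ^ (k - s) * m) ≤ 3 ^ s * (2 ^ (k - s) * m) :=
    Nat.mul_le_mul_right _ (Nat.pow_le_pow_left (by norm_num) s)
  have := iterate_T_of_succ_eq_two_pow_mul h'
  omega

def FirstFallBelow (b y σ : ℕ) : Prop := T^[σ] y < b ∧ ∀ s < σ, b ≤ T^[s] y

lemma FirstFallBelow.one_le {x σ : ℕ} (h : FirstFallBelow x x σ) : 1 ≤ σ :=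
  Nat.pos_of_ne_zero (by rintro rfl; exact lt_irrefl x h.1)

lemma FirstFallBelow.stoppingTime_eq {x σ : ℕ} (h : FirstFallBelow x x σ) :
    stoppingTime x = σ :=
  IsLeast.csInf_eq
    ⟨⟨h.one_le, h.1⟩, fun _ hs => le_of_not_gt fun hlt => (h.2 _ hlt).not_gt hs.2⟩

lemma FirstFallBelow.of_iterate {b y a c : ℕ} (h₁ : ∀ s < a, b ≤ T^[s] y)
    (h₂ : FirstFallBelow b (T^[a] y) c) : FirstFallBelow b y (a + c) := by
  refine ⟨by rw [add_comm, Function.iterate_add_apply]; exact h₂.1, fun s hs => ?_⟩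
  rcases lt_or_ge s a with hsa | hsa
  · exact h₁ s hsa
  · obtain ⟨j, rfl⟩ := Nat.exists_eq_add_of_le hsa
    rw [add_comm, Function.iterate_add_apply]
    exact h₂.2 j (by omega)

lemma firstFallBelow_two_pow_mul {b t : ℕ} (E : ℕ) (hlt : t < b) (hle : b ≤ 2 * t) :
    FirstFallBelow b (2 ^ E * t) E := by
  refine ⟨by rwa [iterate_T_two_pow_mul], fun j hj => ?_⟩
  obtain ⟨i, rfl⟩ := Nat.exists_eq_add_of_lt hj
  rw [show 2 ^ (j + i + 1) * t = 2 ^ j * (2 ^ (i + 1) * t) by ring, iterate_T_two_pow_mul]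
  exact hle.trans (Nat.mul_le_mul_right t (Nat.le_self_pow (by omega) 2))

lemma lt_and_le_two_mul_of_two_pow_bounds {G F c u x t : ℕ} (hx : x + 1 = 2 ^ G * u)
    (ht : c * u = 2 ^ F * t + 1) (hhigh : c < 2 ^ (G + F)) (hlow : 2 ^ (G + F) < 2 * c)
    (hd : ¬ 2 ^ (G + F) - c ∣ 2 ^ F - 1) : t < x ∧ x ≤ 2 * t := by
  have hu : 0 < u := Nat.pos_of_ne_zero (by rintro rfl; simp at ht)
  have hF : 0 < 2 ^ F := by positivity
  have hscale : 2 ^ (G + F) * u = 2 ^ F * x + 2 ^ F := by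
    rw [pow_add, mul_comm (2 ^ G), mul_assoc, ← hx]; ring
  have hhigh_u : c * u < 2 ^ (G + F) * u := Nat.mul_lt_mul_of_pos_right hhigh hu
  have hlow_u : 2 ^ (G + F) * u + u ≤ 2 * (c * u) := by
    have := Nat.mul_le_mul_right u (Nat.succ_le_of_lt hlow)
    rwa [Nat.succ_mul, mul_assoc] at this
  have hle : t ≤ x := by
    have : 2 ^ F * t < 2 ^ F * (x + 1) := by rw [mul_add]; omega
    exact Nat.lt_succ_iff.mp (Nat.lt_of_mul_lt_mul_left this)
  have hne : t ≠ x := by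
    rintro rfl
    exact hd ⟨u, by rw [Nat.sub_mul]; omega⟩
  refine ⟨lt_of_le_of_ne hle hne, Nat.le_of_mul_le_mul_left ?_ hF⟩
  rw [mul_left_comm]
  omega

lemma two_pow_succ_le_three_pow {M : ℕ} (hM : 2 ≤ M) : 2 ^ (M + 1) ≤ 3 ^ M := by
  obtain ⟨k, rfl⟩ := Nat.exists_eq_add_of_le' hM
  have := Nat.pow_le_pow_left (show 2 ≤ 3 by norm_num) k
  rw [pow_add, pow_add, pow_add]
  omega

lemma exists_eq_two_pow_mul_add_one {a F : ℕ} (ha : 0 < a) (h : a ≡ 1 [MOD 2 ^ F]) :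
    ∃ t, a = 2 ^ F * t + 1 := by
  obtain ⟨t, ht⟩ := (Nat.modEq_iff_dvd' ha).mp h.symm
  exact ⟨t, by omega⟩

/-- The first `N + E` steps of the orbit of `x` have parity vector `1^N 0^E`. -/
lemma firstFallBelow_of_parity_ones_zeros {N E x m : ℕ} (hx : x + 1 = 2 ^ N * m)
    (hmod : 3 ^ N * m ≡ 1 [MOD 2 ^ E]) (hhigh : 3 ^ N < 2 ^ (N + E))
    (hlow : 2 ^ (N + E) < 2 * 3 ^ N) (hd : ¬ 2 ^ (N + E) - 3 ^ N ∣ 2 ^ E - 1) :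
    FirstFallBelow x x (N + E) := by
  have hm : 0 < m := Nat.pos_of_ne_zero (by rintro rfl; simp at hx)
  obtain ⟨t, ht⟩ := exists_eq_two_pow_mul_add_one (by positivity) hmod
  obtain ⟨hlt, hle⟩ := lt_and_le_two_mul_of_two_pow_bounds hx ht hhigh hlow hd
  have hN : T^[N] x = 2 ^ E * t := by
    have := iterate_T_of_succ_eq_two_pow_mul hx
    omega
  exact FirstFallBelow.of_iterate (fun s hs => le_iterate_T_of_succ_eq_two_pow_mul hx hs.le)
    (hN ▸ firstFallBelow_two_pow_mul E hlt hle)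

/-- The first `M + E + 1` steps of the orbit of `x` have parity vector `1^M 0 1 0^(E-1)`. -/
lemma firstFallBelow_of_parity_ones_zero_one_zeros {M E x u : ℕ} (hM : 2 ≤ M) (hE : 2 ≤ E)
    (hx : x + 1 = 2 ^ M * u) (hmod : 3 ^ (M + 1) * u ≡ 1 [MOD 2 ^ (E + 1)])
    (hhigh : 3 ^ (M + 1) < 2 ^ (M + (E + 1))) (hlow : 2 ^ (M + (E + 1)) < 2 * 3 ^ (M + 1))
    (hd : ¬ 2 ^ (M + (E + 1)) - 3 ^ (M + 1) ∣ 2 ^ (E + 1) - 1) :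
    FirstFallBelow x x (M + (E + 1)) := by
  have hu : 0 < u := Nat.pos_of_ne_zero (by rintro rfl; simp at hx)
  obtain ⟨t, ht⟩ := exists_eq_two_pow_mul_add_one (by positivity) hmod
  obtain ⟨hlt, hle⟩ := lt_and_le_two_mul_of_two_pow_bounds hx ht hhigh hlow hd
  have hy := iterate_T_of_succ_eq_two_pow_mul hx
  have h3 : 3 ^ (M + 1) * u = 3 * (3 ^ M * u) := by ring
  have h8 : 2 ^ (E + 1) * t = 8 * (2 ^ (E - 2) * t) := by
    rw [← mul_assoc, show 8 = 2 ^ 3 by rfl, ← pow_add, show 3 + (E - 2) = E + 1 by omega]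
  have h4 : 2 ^ (E - 1) * t = 2 * (2 ^ (E - 2) * t) := by
    rw [← mul_assoc, ← pow_succ', show E - 2 + 1 = E - 1 by omega]
  -- `3 (T^[M] x + 1) ≡ 1 (mod 8)` forces `T^[M] x ≡ 2 (mod 8)`
  obtain ⟨c, hc⟩ : ∃ c, T^[M] x = 2 * (2 * (2 * c) + 1) := ⟨T^[M] x / 8, by omega⟩
  have hw : T^[M + 1] x = 2 * (2 * c) + 1 := by
    rw [Function.iterate_succ_apply', hc, T_two_mul]
  have hz : T^[1] (T^[M + 1] x) = 2 ^ (E - 1) * t := by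
    rw [Function.iterate_one, hw, T_two_mul_add_one]
    omega
  have hxw : x ≤ T^[0] (T^[M + 1] x) := by
    have := Nat.mul_le_mul_right u (two_pow_succ_le_three_pow hM)
    rw [pow_succ, mul_right_comm, ← hx] at this
    rw [Function.iterate_zero_apply, hw]
    omega
  rw [show M + (E + 1) = M + 1 + (1 + (E - 1)) by omega]
  refine FirstFallBelow.of_iterate (fun s hs => le_iterate_T_of_succ_eq_two_pow_mul hx (by omega))
    (FirstFallBelow.of_iterate (fun s hs => ?_) (hz ▸ firstFallBelow_two_pow_mul _ hlt hle))
  obtain rfl : s = 0 := by omega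
  exact hxw

lemma exists_residue_of_succ_eq_two_pow_mul {G F b : ℕ} (hb : 0 < b) (P : ℕ → Prop)
    (hP : ∀ x m, x + 1 = 2 ^ G * m → m ≡ b [MOD 2 ^ F] → P x) :
    ∃ r < 2 ^ (G + F), ∀ x, x % 2 ^ (G + F) = r → P x := by
  refine ⟨(2 ^ G * b - 1) % 2 ^ (G + F), Nat.mod_lt _ (by positivity), fun x hx => ?_⟩
  have hb' : 1 ≤ 2 ^ G * b := Nat.one_le_iff_ne_zero.2 (by positivity)
  have hmod : x + 1 ≡ 2 ^ G * b [MOD 2 ^ G * 2 ^ F] := by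
    rw [← pow_add]
    have hx' : x ≡ 2 ^ G * b - 1 [MOD 2 ^ (G + F)] := hx
    simpa [Nat.sub_add_cancel hb'] using hx'.add_right 1
  obtain ⟨m, hm⟩ : 2 ^ G ∣ x + 1 :=
    (hmod.dvd_iff (dvd_mul_right _ _)).mpr (dvd_mul_right _ _)
  exact hP x m hm (Nat.ModEq.mul_left_cancel' (by positivity) (hm ▸ hmod))

lemma exists_pos_three_pow_mul_modEq_one (N F : ℕ) :
    ∃ u, 0 < u ∧ 3 ^ N * u ≡ 1 [MOD 2 ^ F] := by
  refine ⟨(3 ^ (Nat.totient (2 ^ F) - 1)) ^ N, by positivity, ?_⟩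
  rw [← mul_pow, ← pow_succ', Nat.sub_add_cancel (Nat.totient_pos.2 (by positivity))]
  simpa using (Nat.ModEq.pow_totient (Nat.Coprime.pow_right F (by norm_num))).pow N

lemma two_pow_ne_three_pow_add_one {k N : ℕ} (hk : 3 ≤ k) : 2 ^ k ≠ 3 ^ N + 1 := by
  have h8 : 2 ^ k = 8 * 2 ^ (k - 3) := by
    rw [show 8 = 2 ^ 3 by rfl, ← pow_add, Nat.add_sub_cancel' hk]
  have h3 : 3 ^ N % 8 = 1 ∨ 3 ^ N % 8 = 3 := by
    induction N with
    | zero => simp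
    | succ N ih => rw [pow_succ]; omega
  omega

theorem exists_residue_firstFallBelow {N σ : ℕ} (hN : 2 ≤ N) (hhigh : 3 ^ N < 2 ^ σ)
    (hlow : 2 ^ σ < 2 * 3 ^ N) :
    ∃ r < 2 ^ σ, ∀ x, x % 2 ^ σ = r → FirstFallBelow x x σ := by
  have hσ : N + 1 < σ :=
    (Nat.pow_lt_pow_iff_right (by norm_num)).mp ((two_pow_succ_le_three_pow hN).trans_lt hhigh)
  obtain ⟨E, rfl⟩ : ∃ E, σ = N + E := ⟨σ - N, by omega⟩
  have hE4 : 4 ≤ 2 ^ E := by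
    calc 4 = 2 ^ 2 := rfl
      _ ≤ 2 ^ E := Nat.pow_le_pow_right (by norm_num) (by omega)
  by_cases hA : 2 ^ (N + E) - 3 ^ N ∣ 2 ^ E - 1
  · have hN3 : 3 ≤ N := by
      by_contra hN3
      obtain rfl : N = 2 := by omega
      have := Nat.le_of_dvd (by omega) hA
      rw [pow_add] at this
      omega
    have hB : ¬ 2 ^ (N + E) - 3 ^ N ∣ 2 ^ (E + 1) - 1 := by
      intro hB
      have hsplit : 2 ^ (E + 1) - 1 = 2 * (2 ^ E - 1) + 1 := by rw [pow_succ]; omega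
      rw [hsplit, Nat.dvd_add_right (dvd_mul_of_dvd_right hA 2), Nat.dvd_one] at hB
      exact two_pow_ne_three_pow_add_one (k := N + E) (by omega)
        (by rw [Nat.eq_add_of_sub_eq hhigh.le hB, add_comm])
    obtain ⟨M, rfl⟩ : ∃ M, N = M + 1 := ⟨N - 1, by omega⟩
    rw [show M + 1 + E = M + (E + 1) by omega] at hhigh hlow hB ⊢
    obtain ⟨u, hu, hmod⟩ := exists_pos_three_pow_mul_modEq_one (M + 1) (E + 1)
    exact exists_residue_of_succ_eq_two_pow_mul hu _ fun x m hx hm =>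
      firstFallBelow_of_parity_ones_zero_one_zeros (by omega) (by omega) hx
        ((hm.mul_left _).trans hmod) hhigh hlow hB
  · obtain ⟨m, hm, hmod⟩ := exists_pos_three_pow_mul_modEq_one N E
    exact exists_residue_of_succ_eq_two_pow_mul hm _ fun x m' hx hm' =>
      firstFallBelow_of_parity_ones_zeros hx ((hm'.mul_left _).trans hmod) hhigh hlow hA

lemma three_pow_lt_two_pow_sigmaN (n : ℕ) :
    3 ^ (n + 1) < 2 ^ sigmaN n ∧ 2 ^ sigmaN n < 2 * 3 ^ (n + 1) := by
  have hL : ((n : ℝ) + 1) * Real.logb 2 3 = Real.logb 2 ((3 : ℝ) ^ (n + 1)) := by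
    rw [Real.logb_pow]; push_cast; ring
  set L := Real.logb 2 ((3 : ℝ) ^ (n + 1))
  have h2L : (2 : ℝ) ^ L = 3 ^ (n + 1) :=
    Real.rpow_logb (by norm_num) (by norm_num) (by positivity)
  have hL0 : 0 ≤ L := Real.logb_nonneg (by norm_num) (one_le_pow₀ (by norm_num))
  unfold sigmaN
  rw [hL]
  set σ := ⌊1 + L⌋₊
  have hσ_le : (σ : ℝ) ≤ 1 + L := Nat.floor_le (by positivity)
  have hσ_gt : 1 + L < σ + 1 := Nat.lt_floor_add_one _
  have hhigh : (3 : ℝ) ^ (n + 1) < 2 ^ σ := by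
    rw [← h2L, ← Real.rpow_natCast]
    exact Real.rpow_lt_rpow_of_exponent_lt (by norm_num) (by linarith)
  have hle : (2 : ℝ) ^ σ ≤ 2 * 3 ^ (n + 1) := by
    rw [← h2L, ← Real.rpow_natCast, ← Real.rpow_one_add' (by norm_num) (by positivity)]
    exact Real.rpow_le_rpow_of_exponent_le (by norm_num) hσ_le
  refine ⟨by exact_mod_cast hhigh, lt_of_le_of_ne (by exact_mod_cast hle) fun h => ?_⟩
  have h3 : 3 ∣ 2 ^ σ := h ▸ dvd_mul_of_dvd_right (dvd_pow_self 3 n.succ_ne_zero) 2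
  have := Nat.Prime.dvd_of_dvd_pow Nat.prime_three h3
  omega

theorem stmt0 :
    ∀ n : ℕ, 1 ≤ n → ∃ r : ℕ, r < 2 ^ sigmaN n ∧
      ∀ x : ℕ, 1 < x → x % 2 ^ sigmaN n = r →
        (∃ s : ℕ, 1 ≤ s ∧ T^[s] x < x) ∧ stoppingTime x = sigmaN n := by
  intro n hn
  obtain ⟨hhigh, hlow⟩ := three_pow_lt_two_pow_sigmaN n
  obtain ⟨r, hr, hfall⟩ := exists_residue_firstFallBelow (by omega) hhigh hlow
  refine ⟨r, hr, fun x _ hx => ?_⟩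
  have h := hfall x hx
  exact ⟨⟨sigmaN n, h.one_le, h.1⟩, h.stoppingTime_eq⟩
end

section
/- Let n ≥ 1 and let x > 1 be odd with stopping time σ(x) = σ_n. Suppose that exactly n+1 indices s with 0 ≤ s ≤ κ(n) satisfy that T^s(x) is odd, and let α_1 < α_2 < ... < α_{n+1} enumerate these indices. Then 2^{σ_n} · T^{σ_n}(x) = 3^{n+1}·x + Σ_{i=1}^{n+1} 3^{n+1−i}·2^{α_i}, and T^{σ_n}(x) < x. -/
/-- `κ(n) = ⌊n·log₂ 3⌋`. -/
noncomputable def kappa (n : ℕ) : ℕ := ⌊(n : ℝ) * Real.logb 2 3⌋₊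

open Finset

lemma one_le_logb_two_three : (1 : ℝ) ≤ Real.logb 2 3 := by
  rw [Real.le_logb_iff_rpow_le (by norm_num) (by norm_num)]
  norm_num

lemma kappa_lt_sigmaN (n : ℕ) : kappa n < sigmaN n := by
  have hL := one_le_logb_two_three
  have hnL : (0 : ℝ) ≤ n * Real.logb 2 3 := by positivity
  calc kappa n < ⌊(n : ℝ) * Real.logb 2 3 + (1 : ℕ)⌋₊ := by
        rw [Nat.floor_add_natCast hnL]; exact Nat.lt_succ_self _
    _ ≤ sigmaN n := Nat.floor_le_floor (by push_cast; nlinarith)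

lemma two_pow_sigmaN_lt (n : ℕ) : 2 ^ sigmaN n < 3 ^ (n + 2) := by
  have hL : (0 : ℝ) ≤ Real.logb 2 3 := zero_le_one.trans one_le_logb_two_three
  have hσ : (sigmaN n : ℝ) ≤ Real.logb 2 (2 * 3 ^ (n + 1)) := by
    rw [Real.logb_mul (by norm_num) (by positivity), Real.logb_self_eq_one (by norm_num),
      Real.logb_pow]
    push_cast
    exact Nat.floor_le (by positivity)
  rw [Real.le_logb_iff_rpow_le (by norm_num) (by positivity), Real.rpow_natCast] at hσ
  have : 2 ^ sigmaN n ≤ 2 * 3 ^ (n + 1) := by exact_mod_cast hσ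
  rw [pow_succ _ (n + 1)]
  have : 0 < 3 ^ (n + 1) := by positivity
  omega

lemma iterate_stoppingTime_lt {x : ℕ} (h : stoppingTime x ≠ 0) :
    T^[stoppingTime x] x < x :=
  (Nat.sInf_mem (Nat.nonempty_of_pos_sInf (Nat.pos_of_ne_zero h))).2

lemma two_mul_T_of_even {y : ℕ} (h : y % 2 = 0) : 2 * T y = y := by
  simp only [T, h, if_true]; omega

lemma two_mul_T_of_odd {y : ℕ} (h : y % 2 = 1) : 2 * T y = 3 * y + 1 := by
  simp only [T, h, one_ne_zero, if_false]; omega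

def oddSteps (x s : ℕ) : Finset ℕ :=
  (range s).filter (fun k => T^[k] x % 2 = 1)

lemma lt_of_mem_oddSteps {x s k : ℕ} (hk : k ∈ oddSteps x s) : k < s :=
  mem_range.1 (mem_filter.1 hk).1

lemma oddSteps_succ_of_even {x s : ℕ} (h : T^[s] x % 2 = 0) :
    oddSteps x (s + 1) = oddSteps x s := by
  simp [oddSteps, range_add_one, filter_insert, h]

lemma oddSteps_succ_of_odd {x s : ℕ} (h : T^[s] x % 2 = 1) :
    oddSteps x (s + 1) = insert s (oddSteps x s) := by
  simp [oddSteps, range_add_one, filter_insert, h]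

def oddStepWeight (S : Finset ℕ) (k : ℕ) : ℕ := 3 ^ #(S.filter (k < ·)) * 2 ^ k

lemma sum_oddStepWeight_insert {S : Finset ℕ} {s : ℕ} (hS : ∀ k ∈ S, k < s) :
    ∑ k ∈ insert s S, oddStepWeight (insert s S) k = 3 * ∑ k ∈ S, oddStepWeight S k + 2 ^ s := by
  have hs : s ∉ S := fun h => (hS s h).false
  have htop : (insert s S).filter (s < ·) = ∅ :=
    filter_false_of_mem fun j hj => not_lt.2 (by rcases mem_insert.1 hj with rfl | hj <;> grind)
  rw [sum_insert hs, mul_sum, add_comm, oddStepWeight, htop, card_empty, pow_zero, one_mul]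
  congr 1
  refine sum_congr rfl fun k hk => ?_
  rw [oddStepWeight, oddStepWeight, filter_insert, if_pos (hS k hk),
    card_insert_of_notMem (fun h => hs (mem_filter.1 h).1), pow_succ]
  ring

theorem two_pow_mul_iterate_T (x s : ℕ) :
    2 ^ s * T^[s] x = 3 ^ #(oddSteps x s) * x + ∑ k ∈ oddSteps x s, oddStepWeight (oddSteps x s) k := by
  induction s with
  | zero => simp [oddSteps]
  | succ s ih =>
    rw [Function.iterate_succ_apply', pow_succ, mul_assoc]
    rcases Nat.mod_two_eq_zero_or_one (T^[s] x) with h | h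
    · rw [two_mul_T_of_even h, oddSteps_succ_of_even h, ih]
    · rw [two_mul_T_of_odd h, oddSteps_succ_of_odd h,
        sum_oddStepWeight_insert fun _ => lt_of_mem_oddSteps,
        card_insert_of_notMem fun h => (lt_of_mem_oddSteps h).false, pow_succ, mul_add,
        mul_left_comm, ih]
      ring

lemma three_pow_card_oddSteps_lt_two_pow {x s : ℕ} (h : T^[s] x < x) :
    3 ^ #(oddSteps x s) < 2 ^ s := by
  have hexp : 3 ^ #(oddSteps x s) * x ≤ 2 ^ s * T^[s] x :=
    (two_pow_mul_iterate_T x s).symm ▸ Nat.le_add_right _ _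
  exact lt_of_mul_lt_mul_right (hexp.trans_lt (Nat.mul_lt_mul_of_pos_left h (by positivity))) (Nat.zero_le x)

lemma card_filter_lt_image_of_strictMono {m : ℕ} {α : Fin (m + 1) → ℕ} (hα : StrictMono α)
    (i : Fin (m + 1)) : #((univ.image α).filter (α i < ·)) = m - i := by
  rw [filter_image, card_image_of_injective _ hα.injective]
  have hIoi : univ.filter (fun j => α i < α j) = Ioi i := by ext; simp [hα.lt_iff_lt]
  rw [hIoi, Fin.card_Ioi, Nat.add_sub_cancel]

theorem stmt1_general (n : ℕ) (x : ℕ)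
    (hstop : stoppingTime x = sigmaN n)
    (α : Fin (n + 1) → ℕ) (hmono : StrictMono α) (hle : ∀ i, α i ≤ kappa n)
    (henum : ∀ s : ℕ, s ≤ kappa n → (T^[s] x % 2 = 1 ↔ ∃ i, α i = s)) :
    2 ^ sigmaN n * T^[sigmaN n] x
      = 3 ^ (n + 1) * x + ∑ i : Fin (n + 1), 3 ^ (n - (i : ℕ)) * 2 ^ α i ∧
    T^[sigmaN n] x < x := by
  have hlt : T^[sigmaN n] x < x :=
    hstop ▸ iterate_stoppingTime_lt (hstop ▸ (Nat.zero_lt_of_lt (kappa_lt_sigmaN n)).ne')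
  have hsub : univ.image α ⊆ oddSteps x (sigmaN n) := by
    simp only [subset_iff, mem_image, mem_univ, true_and, forall_exists_index,
      forall_apply_eq_imp_iff, oddSteps, mem_filter, mem_range]
    exact fun i => ⟨(hle i).trans_lt (kappa_lt_sigmaN n), (henum _ (hle i)).2 ⟨i, rfl⟩⟩
  have hcard : #(oddSteps x (sigmaN n)) ≤ #(univ.image α) := by
    rw [card_image_of_injective _ hmono.injective, card_univ, Fintype.card_fin, ← Nat.lt_succ_iff,
      ← Nat.pow_lt_pow_iff_right (by norm_num : 1 < 3)]
    exact (three_pow_card_oddSteps_lt_two_pow hlt).trans (two_pow_sigmaN_lt n)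
  have hodd : oddSteps x (sigmaN n) = univ.image α := (eq_of_subset_of_card_le hsub hcard).symm
  refine ⟨?_, hlt⟩
  rw [two_pow_mul_iterate_T, hodd, card_image_of_injective _ hmono.injective, card_univ,
    Fintype.card_fin, sum_image fun _ _ _ _ h => hmono.injective h]
  simp only [oddStepWeight, card_filter_lt_image_of_strictMono hmono]

theorem stmt1 (n : ℕ) (hn : 1 ≤ n) (x : ℕ) (hx : 1 < x) (hxodd : x % 2 = 1)
    (hstop : stoppingTime x = sigmaN n)
    (α : Fin (n + 1) → ℕ) (hmono : StrictMono α) (hle : ∀ i, α i ≤ kappa n)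
    (henum : ∀ s : ℕ, s ≤ kappa n → (T^[s] x % 2 = 1 ↔ ∃ i, α i = s)) :
    2 ^ sigmaN n * T^[sigmaN n] x
      = 3 ^ (n + 1) * x + ∑ i : Fin (n + 1), 3 ^ (n - (i : ℕ)) * 2 ^ α i ∧
    T^[sigmaN n] x < x :=
  stmt1_general n x hstop α hmono hle henum
end

section
/- For every natural number x and every k ≥ 1, if m = m_k(x) and α_1 < α_2 < ... < α_m enumerate the indices s with 0 ≤ s < k such that T^s(x) is odd, then 2^k · T^k(x) = 3^m · x + Σ_{i=1}^{m} 3^{m−i}·2^{α_i}. -/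
/-- `m k x` is the number of indices `s` with `0 ≤ s < k` such that `T^[s] x` is odd. -/
def m (k x : ℕ) : ℕ := ((Finset.range k).filter (fun s => T^[s] x % 2 = 1)).card

/-- The set of odd indices below `k`. -/
def S (k x : ℕ) : Finset ℕ := (Finset.range k).filter (fun s => T^[s] x % 2 = 1)

lemma key (x k : ℕ) :
    2 ^ k * T^[k] x
      = 3 ^ m k x * x + ∑ s ∈ S k x, 3 ^ ((S k x).filter (fun t => s < t)).card * 2 ^ s := by
  induction k with
  | zero => simp [m, S]
  | succ k ih =>
    have hiter : T^[k+1] x = T (T^[k] x) := Function.iterate_succ_apply' T k x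
    have hrange : Finset.range (k+1) = insert k (Finset.range k) := Finset.range_add_one
    by_cases h : T^[k] x % 2 = 1
    · -- odd case
      have hS : S (k+1) x = insert k (S k x) := by
        simp [S, hrange, Finset.filter_insert, h]
      have hknot : k ∉ S k x := by simp [S]
      have hm : m (k+1) x = m k x + 1 := by
        simp only [m]
        rw [show ((Finset.range (k+1)).filter (fun s => T^[s] x % 2 = 1)) = S (k+1) x from rfl,
          hS, Finset.card_insert_of_notMem hknot]
        rfl
      have hT : 2 * T^[k+1] x = 3 * T^[k] x + 1 := by
        rw [hiter, T, if_neg (by omega)]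
        omega
      have hsum : ∑ s ∈ S (k+1) x, 3 ^ ((S (k+1) x).filter (fun t => s < t)).card * 2 ^ s
          = 3 * (∑ s ∈ S k x, 3 ^ ((S k x).filter (fun t => s < t)).card * 2 ^ s) + 2 ^ k := by
        rw [hS, Finset.sum_insert hknot]
        have h1 : ((insert k (S k x)).filter (fun t => k < t)) = ∅ := by
          apply Finset.filter_false_of_mem
          intro t ht
          simp only [Finset.mem_insert, S, Finset.mem_filter, Finset.mem_range] at ht
          rcases ht with rfl | ht <;> omega
        rw [h1]
        simp only [Finset.card_empty, pow_zero, one_mul]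
        rw [Finset.mul_sum]
        have h2 : ∀ s ∈ S k x,
            3 ^ ((insert k (S k x)).filter (fun t => s < t)).card * 2 ^ s
              = 3 * (3 ^ ((S k x).filter (fun t => s < t)).card * 2 ^ s) := by
          intro s hs
          have hsk : s < k := by
            simp only [S, Finset.mem_filter, Finset.mem_range] at hs; exact hs.1
          rw [Finset.filter_insert, if_pos hsk, Finset.card_insert_of_notMem (by
            intro hc; exact hknot (Finset.mem_filter.mp hc).1)]
          ring
        rw [Finset.sum_congr rfl h2]
        omega
      rw [hsum, hm]
      have : 2 ^ (k+1) * T^[k+1] x = 2 ^ k * (2 * T^[k+1] x) := by ring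
      rw [this, hT]
      have : 2 ^ k * (3 * T^[k] x + 1) = 3 * (2 ^ k * T^[k] x) + 2 ^ k := by ring
      rw [this, ih]
      ring
    · -- even case
      have hS : S (k+1) x = S k x := by
        simp [S, hrange, Finset.filter_insert, h]
      have hm : m (k+1) x = m k x := by
        show (S (k+1) x).card = (S k x).card
        rw [hS]
      have hT : 2 * T^[k+1] x = T^[k] x := by
        rw [hiter, T, if_pos (by omega)]
        omega
      have : 2 ^ (k+1) * T^[k+1] x = 2 ^ k * (2 * T^[k+1] x) := by ring
      rw [this, hT, ih, hm, hS]

theorem stmt2 (x k : ℕ) (hk : 1 ≤ k)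
    (α : Fin (m k x) → ℕ) (hmono : StrictMono α) (hlt : ∀ i, α i < k)
    (henum : ∀ s : ℕ, s < k → (T^[s] x % 2 = 1 ↔ ∃ i, α i = s)) :
    2 ^ k * T^[k] x
      = 3 ^ m k x * x + ∑ i : Fin (m k x), 3 ^ (m k x - 1 - (i : ℕ)) * 2 ^ α i := by
  have hinj : Function.Injective α := hmono.injective
  -- the image of α is S k x
  have himg : Finset.image α Finset.univ = S k x := by
    apply Finset.eq_of_subset_of_card_le
    · intro s hs
      simp only [Finset.mem_image, Finset.mem_univ, true_and] at hs
      obtain ⟨i, rfl⟩ := hs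
      simp only [S, Finset.mem_filter, Finset.mem_range]
      exact ⟨hlt i, (henum (α i) (hlt i)).mpr ⟨i, rfl⟩⟩
    · rw [Finset.card_image_of_injective _ hinj, Finset.card_univ, Fintype.card_fin]
      exact le_of_eq rfl
  have hexp : ∀ i : Fin (m k x),
      ((S k x).filter (fun t => α i < t)).card = m k x - 1 - (i : ℕ) := by
    intro i
    have : (S k x).filter (fun t => α i < t) = Finset.image α (Finset.Ioi i) := by
      rw [← himg]
      ext t
      simp only [Finset.mem_filter, Finset.mem_image, Finset.mem_univ, true_and,
        Finset.mem_Ioi]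
      constructor
      · rintro ⟨⟨j, rfl⟩, hj⟩
        exact ⟨j, hmono.lt_iff_lt.mp hj, rfl⟩
      · rintro ⟨j, hj, rfl⟩
        exact ⟨⟨j, rfl⟩, hmono hj⟩
    rw [this, Finset.card_image_of_injective _ hinj, Fin.card_Ioi]
  rw [key x k]
  congr 1
  rw [← himg, Finset.sum_image (fun a _ b _ h => hinj h)]
  apply Finset.sum_congr rfl
  intro i _
  rw [← hexp i, ← himg]
end

section
/- For all natural numbers x, a and k, one has T^k(x + a·2^k) = T^k(x) + a·3^{m_k(x)}. In particular, T^k(x + 2^k) and T^k(x) have opposite parity. -/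
theorem stmt3 (x a k : ℕ) :
    T^[k] (x + a * 2 ^ k) = T^[k] x + a * 3 ^ m k x ∧
    T^[k] (x + 2 ^ k) % 2 ≠ T^[k] x % 2 := by
  have Tadd : ∀ y c : ℕ, T (y + 2 * c) = T y + (if y % 2 = 0 then c else 3 * c) := by
    intro y c
    unfold T
    have h : (y + 2 * c) % 2 = y % 2 := by omega
    rw [h]
    rcases Nat.mod_two_eq_zero_or_one y with h2 | h2 <;> simp [h2] <;> omega
  have msucc : ∀ k x : ℕ, m (k + 1) x = m k x + (if T^[k] x % 2 = 1 then 1 else 0) := by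
    intro k x
    unfold m
    rw [Finset.range_add_one, Finset.filter_insert]
    split
    · rw [Finset.card_insert_of_notMem (by simp)]
    · simp
  have main : ∀ k a : ℕ, T^[k] (x + a * 2 ^ k) = T^[k] x + a * 3 ^ m k x := by
    intro k
    induction k with
    | zero => intro a; simp [m]
    | succ k ih =>
      intro a
      have e1 : x + a * 2 ^ (k + 1) = x + (2 * a) * 2 ^ k := by ring_nf
      rw [e1, Function.iterate_succ_apply', Function.iterate_succ_apply', ih (2 * a)]
      have e2 : T^[k] x + 2 * a * 3 ^ m k x = T^[k] x + 2 * (a * 3 ^ m k x) := by ring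
      rw [e2, Tadd, msucc]
      rcases Nat.mod_two_eq_zero_or_one (T^[k] x) with h2 | h2 <;> simp [h2] <;> ring
  refine ⟨main k a, ?_⟩
  have := main k 1
  rw [one_mul] at this
  rw [this]
  have : 3 ^ m k x % 2 = 1 := Nat.odd_iff.mp (Odd.pow (by decide))
  omega
end

section
/- For all natural numbers x, y and every k ≥ 1: x ≡ y (mod 2^k) if and only if for every s with 0 ≤ s < k the integers T^s(x) and T^s(y) have the same parity. Consequently, for each k the residue of x modulo 2^k is in bijective correspondence with the parity vector (T^0(x) mod 2, ..., T^{k−1}(x) mod 2). -/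
lemma two_mul_mod (m a b : ℕ) : (2*a) % (2*m) = (2*b) % (2*m) ↔ a % m = b % m := by
  rw [Nat.mul_mod_mul_left, Nat.mul_mod_mul_left]; omega

lemma step_lemma (k x y : ℕ) (hp : x % 2 = y % 2) :
    x % 2^(k+1) = y % 2^(k+1) ↔ T x % 2^k = T y % 2^k := by
  have hpow : (2:ℕ)^(k+1) = 2 * 2^k := by ring
  rcases Nat.even_or_odd x with hx | hx
  · have hx0 : x % 2 = 0 := Nat.even_iff.mp hx
    have hy0 : y % 2 = 0 := by omega
    have hTx : T x = x / 2 := by simp [T, hx0]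
    have hTy : T y = y / 2 := by simp [T, hy0]
    rw [hTx, hTy, hpow]
    have e1 : x = 2 * (x/2) := by omega
    have e2 : y = 2 * (y/2) := by omega
    rw [show x % (2*2^k) = (2*(x/2)) % (2*2^k) by rw [← e1],
        show y % (2*2^k) = (2*(y/2)) % (2*2^k) by rw [← e2]]
    exact two_mul_mod _ _ _
  · have hx1 : x % 2 = 1 := Nat.odd_iff.mp hx
    have hy1 : y % 2 = 1 := by omega
    have hTx : T x = (3*x+1) / 2 := by simp [T, hx1]
    have hTy : T y = (3*y+1) / 2 := by simp [T, hy1]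
    have hcop : Nat.Coprime 3 (2^(k+1)) := Nat.Coprime.pow_right _ (by decide)
    have h3 : x % 2^(k+1) = y % 2^(k+1) ↔ (3*x+1) % 2^(k+1) = (3*y+1) % 2^(k+1) := by
      constructor
      · intro h
        exact Nat.ModEq.add_right 1 (Nat.ModEq.mul_left 3 h)
      · intro h
        have h' : 3*x ≡ 3*y [MOD 2^(k+1)] := by
          have := Nat.ModEq.add_right_cancel' 1 h
          exact this
        exact Nat.ModEq.cancel_left_of_coprime hcop.symm h'
    rw [h3, hTx, hTy, hpow]
    have e1 : 3*x+1 = 2 * ((3*x+1)/2) := by omega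
    have e2 : 3*y+1 = 2 * ((3*y+1)/2) := by omega
    rw [show (3*x+1) % (2*2^k) = (2*((3*x+1)/2)) % (2*2^k) by rw [← e1],
        show (3*y+1) % (2*2^k) = (2*((3*y+1)/2)) % (2*2^k) by rw [← e2]]
    exact two_mul_mod _ _ _

lemma main_lemma : ∀ k x y : ℕ,
    x % 2^k = y % 2^k ↔ ∀ s : ℕ, s < k → T^[s] x % 2 = T^[s] y % 2 := by
  intro k
  induction k with
  | zero => intro x y; simp [Nat.mod_one]
  | succ k ih =>
    intro x y
    constructor
    · intro h s hs
      have hpar : x % 2 = y % 2 := by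
        have d : (2:ℕ) ∣ 2^(k+1) := dvd_pow_self 2 (Nat.succ_ne_zero k)
        calc x % 2 = x % 2^(k+1) % 2 := (Nat.mod_mod_of_dvd x d).symm
          _ = y % 2^(k+1) % 2 := by rw [h]
          _ = y % 2 := Nat.mod_mod_of_dvd y d
      cases s with
      | zero => simpa using hpar
      | succ s =>
        have hT : T x % 2^k = T y % 2^k := (step_lemma k x y hpar).mp h
        have := (ih (T x) (T y)).mp hT s (by omega)
        simpa [Function.iterate_succ_apply] using this
    · intro h
      have hpar : x % 2 = y % 2 := by simpa using h 0 (by omega)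
      have hT : T x % 2^k = T y % 2^k := by
        apply (ih (T x) (T y)).mpr
        intro s hs
        have := h (s+1) (by omega)
        simpa [Function.iterate_succ_apply] using this
      exact (step_lemma k x y hpar).mpr hT

theorem stmt4 :
    (∀ x y k : ℕ, 1 ≤ k →
      (x % 2 ^ k = y % 2 ^ k ↔ ∀ s : ℕ, s < k → T^[s] x % 2 = T^[s] y % 2)) ∧
    (∀ k : ℕ, 1 ≤ k →
      Function.Bijective
        (fun r : Fin (2 ^ k) => fun s : Fin k => decide (T^[(s : ℕ)] (r : ℕ) % 2 = 1))) := by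
  constructor
  · intro x y k _
    exact main_lemma k x y
  · intro k _
    rw [Fintype.bijective_iff_injective_and_card]
    constructor
    · intro r1 r2 hf
      have hpar : ∀ s : ℕ, s < k → T^[s] (r1:ℕ) % 2 = T^[s] (r2:ℕ) % 2 := by
        intro s hs
        have := congrFun hf ⟨s, hs⟩
        simp only [decide_eq_decide] at this
        have h1 : T^[s] (r1:ℕ) % 2 = 0 ∨ T^[s] (r1:ℕ) % 2 = 1 := Nat.mod_two_eq_zero_or_one _
        have h2 : T^[s] (r2:ℕ) % 2 = 0 ∨ T^[s] (r2:ℕ) % 2 = 1 := Nat.mod_two_eq_zero_or_one _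
        rcases h1 with h1 | h1 <;> rcases h2 with h2 | h2 <;> omega
      have := (main_lemma k r1 r2).mpr hpar
      have e1 : (r1:ℕ) % 2^k = (r1:ℕ) := Nat.mod_eq_of_lt r1.isLt
      have e2 : (r2:ℕ) % 2^k = (r2:ℕ) := Nat.mod_eq_of_lt r2.isLt
      exact Fin.ext (by rw [← e1, ← e2]; exact this)
    · simp [Fintype.card_fun]
end

section
/- For every natural number x ≥ 1 and every k ≥ 1, if T^k(x) < x then 3^{m_k(x)} < 2^k. -/
/-!
Each step of `T` halves its argument, after first multiplying it by `3` (and adding `1`) when it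
is odd. Hence `3 ^ m k x * x ≤ 2 ^ k * T^[k] x`, and if `T^[k] x < x` the factor `x` cancels.
-/

lemma three_pow_parity_mul_le_two_mul_T (y : ℕ) :
    3 ^ (if y % 2 = 1 then 1 else 0) * y ≤ 2 * T y := by
  unfold T
  split_ifs <;> omega

lemma m_succ (k x : ℕ) :
    m (k + 1) x = m k x + if T^[k] x % 2 = 1 then 1 else 0 := by
  simp only [m, Finset.card_filter, Finset.sum_range_succ]

lemma three_pow_m_mul_le (k x : ℕ) : 3 ^ m k x * x ≤ 2 ^ k * T^[k] x := by
  induction k with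
  | zero => simp [m]
  | succ k ih =>
    calc 3 ^ m (k + 1) x * x
        = 3 ^ (if T^[k] x % 2 = 1 then 1 else 0) * (3 ^ m k x * x) := by rw [m_succ]; ring
      _ ≤ 3 ^ (if T^[k] x % 2 = 1 then 1 else 0) * (2 ^ k * T^[k] x) := by gcongr
      _ = 2 ^ k * (3 ^ (if T^[k] x % 2 = 1 then 1 else 0) * T^[k] x) := by ring
      _ ≤ 2 ^ k * (2 * T (T^[k] x)) := Nat.mul_le_mul_left _ (three_pow_parity_mul_le_two_mul_T _)
      _ = 2 ^ (k + 1) * T^[k + 1] x := by rw [Function.iterate_succ_apply']; ring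

theorem stmt5_general (x k : ℕ) (h : T^[k] x < x) :
    3 ^ m k x < 2 ^ k := by
  have hx : 3 ^ m k x * x < 2 ^ k * x :=
    (three_pow_m_mul_le k x).trans_lt (Nat.mul_lt_mul_of_pos_left h (by positivity))
  exact Nat.lt_of_mul_lt_mul_right hx

theorem stmt5 (x k : ℕ) (hx : 1 ≤ x) (hk : 1 ≤ k) (h : T^[k] x < x) :
    3 ^ m k x < 2 ^ k :=
  stmt5_general x k h
end

section
/- For every natural number x and every h ≥ 1: T^s(x) is odd for all s with 0 ≤ s < h if and only if x ≡ 2^h − 1 (mod 2^h); and in that case 2^h · (T^h(x) + 1) = 3^h · (x + 1). -/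
lemma T_odd_key {x : ℕ} (hx : x % 2 = 1) : 2 * (T x + 1) = 3 * (x + 1) := by
  unfold T
  rw [if_neg (by omega)]
  omega

lemma mod_eq_sub_one_iff {n x : ℕ} (hn : 2 ≤ n) : x % n = n - 1 ↔ n ∣ x + 1 := by
  constructor
  · intro h
    have : (x + 1) % n = 0 := by
      rw [Nat.add_mod, h, Nat.mod_eq_of_lt (by omega : (1:ℕ) < n)]
      rw [Nat.sub_add_cancel (by omega)]
      exact Nat.mod_self n
    exact Nat.dvd_of_mod_eq_zero this
  · intro h
    obtain ⟨k, hk⟩ := h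
    rcases Nat.eq_zero_or_pos k with rfl | h0
    · simp at hk
    have hsucc : k - 1 + 1 = k := Nat.succ_pred_eq_of_pos h0
    have h2 : n * k = n * (k - 1) + n := by
      rw [← Nat.mul_succ, Nat.succ_eq_add_one, hsucc]
    have : x = n * (k - 1) + (n - 1) := by omega
    rw [this, Nat.add_comm, Nat.add_mul_mod_self_left]
    exact Nat.mod_eq_of_lt (by omega)

theorem stmt7 (x h : ℕ) (hh : 1 ≤ h) :
    ((∀ s : ℕ, s < h → T^[s] x % 2 = 1) ↔ x % 2 ^ h = 2 ^ h - 1) ∧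
    ((∀ s : ℕ, s < h → T^[s] x % 2 = 1) → 2 ^ h * (T^[h] x + 1) = 3 ^ h * (x + 1)) := by
  induction h, hh using Nat.le_induction generalizing x with
  | base =>
    constructor
    · constructor
      · intro H
        have h1 := H 0 one_pos
        simp only [Function.iterate_zero, id_eq] at h1
        simp only [pow_one]
        omega
      · intro H s hs
        interval_cases s
        simp only [Function.iterate_zero, id_eq, pow_one] at *
        omega
    · intro H
      have h1 := H 0 one_pos
      simp only [Function.iterate_zero, id_eq] at h1
      simp only [pow_one, Function.iterate_one]
      exact T_odd_key h1
  | succ h hh IH =>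
    have hodd_iff : (∀ s : ℕ, s < h + 1 → T^[s] x % 2 = 1) ↔
        (x % 2 = 1 ∧ ∀ s : ℕ, s < h → T^[s] (T x) % 2 = 1) := by
      constructor
      · intro H
        refine ⟨by simpa using H 0 (by omega), fun s hs => ?_⟩
        have := H (s + 1) (by omega)
        rwa [Function.iterate_succ_apply] at this
      · rintro ⟨h0, H⟩ s hs
        cases s with
        | zero => simpa using h0
        | succ s =>
          rw [Function.iterate_succ_apply]
          exact H s (by omega)
    have hcop : Nat.Coprime (2 ^ (h + 1)) 3 := Nat.Coprime.pow_left _ (by norm_num)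
    have h2le : 2 ≤ 2 ^ (h + 1) := by
      calc 2 = 2 ^ 1 := (pow_one 2).symm
      _ ≤ 2 ^ (h + 1) := Nat.pow_le_pow_right (by norm_num) (by omega)
    have h2leh : 2 ≤ 2 ^ h := by
      calc 2 = 2 ^ 1 := (pow_one 2).symm
      _ ≤ 2 ^ h := Nat.pow_le_pow_right (by norm_num) hh
    have hdvd_iff : 2 ^ (h + 1) ∣ x + 1 ↔ (x % 2 = 1 ∧ 2 ^ h ∣ T x + 1) := by
      constructor
      · intro H
        have h2 : (2:ℕ) ∣ x + 1 := dvd_trans (by simpa using Nat.pow_dvd_pow 2 (by omega : 1 ≤ h + 1)) H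
        have hx : x % 2 = 1 := by omega
        refine ⟨hx, ?_⟩
        have h3 : 2 ^ (h + 1) ∣ 3 * (x + 1) := Dvd.dvd.mul_left H 3
        rw [← T_odd_key hx, pow_succ, mul_comm (2 ^ h) 2] at h3
        exact (Nat.mul_dvd_mul_iff_left (by norm_num : (0:ℕ) < 2)).mp h3
      · rintro ⟨hx, H⟩
        have h3 : 2 ^ (h + 1) ∣ 2 * (T x + 1) := by
          rw [pow_succ, mul_comm (2 ^ h) 2]
          exact Nat.mul_dvd_mul_left 2 H
        rw [T_odd_key hx] at h3
        exact (Nat.Coprime.dvd_of_dvd_mul_left hcop h3)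
    constructor
    · rw [hodd_iff, mod_eq_sub_one_iff h2le, hdvd_iff]
      have := (IH (T x)).1
      rw [this, mod_eq_sub_one_iff h2leh]
    · intro H
      rw [hodd_iff] at H
      obtain ⟨hx, H⟩ := H
      have heq := (IH (T x)).2 H
      rw [Function.iterate_succ_apply, pow_succ, pow_succ,
        mul_comm (2 ^ h) 2, mul_assoc, mul_comm (3 ^ h) 3]
      calc 2 * (2 ^ h * (T^[h] (T x) + 1)) = 2 * (3 ^ h * (T x + 1)) := by rw [heq]
      _ = 3 ^ h * (2 * (T x + 1)) := by ring
      _ = 3 ^ h * (3 * (x + 1)) := by rw [T_odd_key hx]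
      _ = 3 * 3 ^ h * (x + 1) := by ring
end

section
/- For every natural number x > 1, the stopping time of x equals 4 if and only if x ≡ 3 (mod 16). -/
lemma T_even (y : ℕ) (h : y % 2 = 0) : T y = y / 2 := by simp [T, h]

lemma T_odd (y : ℕ) (h : y % 2 = 1) : T y = (3 * y + 1) / 2 := by simp [T, h]

lemma it1 (x : ℕ) : T^[1] x = T x := rfl
lemma it2 (x : ℕ) : T^[2] x = T (T x) := rfl
lemma it3 (x : ℕ) : T^[3] x = T (T (T x)) := rfl
lemma it4 (x : ℕ) : T^[4] x = T (T (T (T x))) := rfl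

lemma st_ne_four_of_mem {x s : ℕ} (h1 : 1 ≤ s) (h2 : s ≤ 3)
    (h3 : T^[s] x < x) : stoppingTime x ≠ 4 := by
  intro h
  have : stoppingTime x ≤ s := Nat.sInf_le ⟨h1, h3⟩
  omega

lemma st_ne_four_of_ge {x : ℕ} (h : x ≤ T^[4] x) : stoppingTime x ≠ 4 := by
  intro h4
  have hne : {s : ℕ | 1 ≤ s ∧ T^[s] x < x}.Nonempty := by
    by_contra h'
    rw [Set.not_nonempty_iff_eq_empty] at h'
    unfold stoppingTime at h4
    rw [h', Nat.sInf_empty] at h4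
    omega
  have hm := Nat.sInf_mem hne
  unfold stoppingTime at h4
  rw [h4] at hm
  exact absurd hm.2 (not_lt.2 h)

lemma st_eq_four {x : ℕ} (h4 : T^[4] x < x) (h1 : x ≤ T^[1] x)
    (h2 : x ≤ T^[2] x) (h3 : x ≤ T^[3] x) : stoppingTime x = 4 := by
  apply le_antisymm
  · exact Nat.sInf_le ⟨by norm_num, h4⟩
  · refine le_csInf ⟨4, by norm_num, h4⟩ ?_
    rintro b ⟨hb1, hb2⟩
    by_contra hlt
    push_neg at hlt
    interval_cases b <;> omega

theorem stmt18 (x : ℕ) (hx : 1 < x) : stoppingTime x = 4 ↔ x % 16 = 3 := by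
  obtain ⟨k, r, hr, hk⟩ : ∃ k r, r < 16 ∧ x = 16 * k + r := ⟨x / 16, x % 16, by omega, by omega⟩
  interval_cases r
  -- r = 0
  · constructor
    · intro h
      exact absurd h (st_ne_four_of_mem (s := 1) le_rfl (by norm_num)
        (by rw [it1, hk, T_even _ (by omega)]; omega))
    · omega
  -- r = 1
  · constructor
    · intro h
      have e1 : T x = 24 * k + 2 := by rw [hk, T_odd _ (by omega)]; omega
      have e2 : T (T x) = 12 * k + 1 := by rw [e1, T_even _ (by omega)]; omega
      exact absurd h (st_ne_four_of_mem (s := 2) (by norm_num) (by norm_num)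
        (by rw [it2, e2, hk]; omega))
    · omega
  -- r = 2
  · constructor
    · intro h
      exact absurd h (st_ne_four_of_mem (s := 1) le_rfl (by norm_num)
        (by rw [it1, hk, T_even _ (by omega)]; omega))
    · omega
  -- r = 3
  · constructor
    · intro _; omega
    · intro _
      have e1 : T x = 24 * k + 5 := by rw [hk, T_odd _ (by omega)]; omega
      have e2 : T (T x) = 36 * k + 8 := by rw [e1, T_odd _ (by omega)]; omega
      have e3 : T (T (T x)) = 18 * k + 4 := by rw [e2, T_even _ (by omega)]; omega
      have e4 : T (T (T (T x))) = 9 * k + 2 := by rw [e3, T_even _ (by omega)]; omega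
      exact st_eq_four (by rw [it4, e4, hk]; omega) (by rw [it1, e1, hk]; omega)
        (by rw [it2, e2, hk]; omega) (by rw [it3, e3, hk]; omega)
  -- r = 4
  · constructor
    · intro h
      exact absurd h (st_ne_four_of_mem (s := 1) le_rfl (by norm_num)
        (by rw [it1, hk, T_even _ (by omega)]; omega))
    · omega
  -- r = 5
  · constructor
    · intro h
      have e1 : T x = 24 * k + 8 := by rw [hk, T_odd _ (by omega)]; omega
      have e2 : T (T x) = 12 * k + 4 := by rw [e1, T_even _ (by omega)]; omega
      exact absurd h (st_ne_four_of_mem (s := 2) (by norm_num) (by norm_num)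
        (by rw [it2, e2, hk]; omega))
    · omega
  -- r = 6
  · constructor
    · intro h
      exact absurd h (st_ne_four_of_mem (s := 1) le_rfl (by norm_num)
        (by rw [it1, hk, T_even _ (by omega)]; omega))
    · omega
  -- r = 7
  · constructor
    · intro h
      have e1 : T x = 24 * k + 11 := by rw [hk, T_odd _ (by omega)]; omega
      have e2 : T (T x) = 36 * k + 17 := by rw [e1, T_odd _ (by omega)]; omega
      have e3 : T (T (T x)) = 54 * k + 26 := by rw [e2, T_odd _ (by omega)]; omega
      have e4 : T (T (T (T x))) = 27 * k + 13 := by rw [e3, T_even _ (by omega)]; omega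
      exact absurd h (st_ne_four_of_ge (by rw [it4, e4, hk]; omega))
    · omega
  -- r = 8
  · constructor
    · intro h
      exact absurd h (st_ne_four_of_mem (s := 1) le_rfl (by norm_num)
        (by rw [it1, hk, T_even _ (by omega)]; omega))
    · omega
  -- r = 9
  · constructor
    · intro h
      have e1 : T x = 24 * k + 14 := by rw [hk, T_odd _ (by omega)]; omega
      have e2 : T (T x) = 12 * k + 7 := by rw [e1, T_even _ (by omega)]; omega
      exact absurd h (st_ne_four_of_mem (s := 2) (by norm_num) (by norm_num)
        (by rw [it2, e2, hk]; omega))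
    · omega
  -- r = 10
  · constructor
    · intro h
      exact absurd h (st_ne_four_of_mem (s := 1) le_rfl (by norm_num)
        (by rw [it1, hk, T_even _ (by omega)]; omega))
    · omega
  -- r = 11
  · constructor
    · intro h
      have e1 : T x = 24 * k + 17 := by rw [hk, T_odd _ (by omega)]; omega
      have e2 : T (T x) = 36 * k + 26 := by rw [e1, T_odd _ (by omega)]; omega
      have e3 : T (T (T x)) = 18 * k + 13 := by rw [e2, T_even _ (by omega)]; omega
      have e4 : T (T (T (T x))) = 27 * k + 20 := by rw [e3, T_odd _ (by omega)]; omega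
      exact absurd h (st_ne_four_of_ge (by rw [it4, e4, hk]; omega))
    · omega
  -- r = 12
  · constructor
    · intro h
      exact absurd h (st_ne_four_of_mem (s := 1) le_rfl (by norm_num)
        (by rw [it1, hk, T_even _ (by omega)]; omega))
    · omega
  -- r = 13
  · constructor
    · intro h
      have e1 : T x = 24 * k + 20 := by rw [hk, T_odd _ (by omega)]; omega
      have e2 : T (T x) = 12 * k + 10 := by rw [e1, T_even _ (by omega)]; omega
      exact absurd h (st_ne_four_of_mem (s := 2) (by norm_num) (by norm_num)
        (by rw [it2, e2, hk]; omega))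
    · omega
  -- r = 14
  · constructor
    · intro h
      exact absurd h (st_ne_four_of_mem (s := 1) le_rfl (by norm_num)
        (by rw [it1, hk, T_even _ (by omega)]; omega))
    · omega
  -- r = 15
  · constructor
    · intro h
      have e1 : T x = 24 * k + 23 := by rw [hk, T_odd _ (by omega)]; omega
      have e2 : T (T x) = 36 * k + 35 := by rw [e1, T_odd _ (by omega)]; omega
      have e3 : T (T (T x)) = 54 * k + 53 := by rw [e2, T_odd _ (by omega)]; omega
      have e4 : T (T (T (T x))) = 81 * k + 80 := by rw [e3, T_odd _ (by omega)]; omega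
      exact absurd h (st_ne_four_of_ge (by rw [it4, e4, hk]; omega))
    · omega
end

section
/- For every natural number x > 1, the stopping time of x equals 7 if and only if x is congruent to 7, 15 or 59 modulo 128. -/
/-- Number of odd terms among the first `s` iterates of `b`. -/
def cnum : ℕ → ℕ → ℕ
  | 0, _ => 0
  | s+1, b => b % 2 + cnum s (T b)

def Acond (s r : ℕ) : Prop :=
  3 ^ cnum s r ≤ 2 ^ s ∧ (T^[s] r < r ∨ (r ≤ 1 ∧ 3 ^ cnum s r + T^[s] r < 2 ^ s + r))

def Bcond (s r : ℕ) : Prop := 2 ^ s ≤ 3 ^ cnum s r ∧ r ≤ T^[s] r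

instance (s r : ℕ) : Decidable (Acond s r) := by unfold Acond; infer_instance
instance (s r : ℕ) : Decidable (Bcond s r) := by unfold Bcond; infer_instance

lemma keyIter : ∀ s a b : ℕ, T^[s] (2 ^ s * a + b) = 3 ^ cnum s b * a + T^[s] b := by
  intro s
  induction s with
  | zero => intro a b; simp [cnum]
  | succ s ih =>
    intro a b
    have h2 : 2 ^ (s+1) * a = 2 * (2 ^ s * a) := by ring
    rcases Nat.mod_two_eq_zero_or_one b with hb | hb
    · have hT : T (2 ^ (s+1) * a + b) = 2 ^ s * a + T b := by
        rw [h2]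
        generalize 2 ^ s * a = m
        simp only [T]
        split_ifs <;> omega
      rw [Function.iterate_succ_apply, Function.iterate_succ_apply, hT, ih]
      simp [cnum, hb]
    · have hT : T (2 ^ (s+1) * a + b) = 2 ^ s * (3 * a) + T b := by
        have h3 : 2 ^ s * (3 * a) = 3 * (2 ^ s * a) := by ring
        rw [h2, h3]
        generalize 2 ^ s * a = m
        simp only [T]
        split_ifs <;> omega
      rw [Function.iterate_succ_apply, Function.iterate_succ_apply, hT, ih]
      simp [cnum, hb, pow_succ]
      ring

lemma Acond_lt {s x : ℕ} (hx : 1 < x) (h : Acond s (x % 2 ^ s)) : T^[s] x < x := by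
  obtain ⟨h1, h2⟩ := h
  have hdm : 2 ^ s * (x / 2 ^ s) + x % 2 ^ s = x := Nat.div_add_mod x (2 ^ s)
  have hk := keyIter s (x / 2 ^ s) (x % 2 ^ s)
  rw [hdm] at hk
  rw [hk]
  rcases h2 with h2 | ⟨hr1, h2⟩
  · calc 3 ^ cnum s (x % 2 ^ s) * (x / 2 ^ s) + T^[s] (x % 2 ^ s)
        < 2 ^ s * (x / 2 ^ s) + x % 2 ^ s :=
          Nat.add_lt_add_of_le_of_lt (Nat.mul_le_mul_right _ h1) h2
      _ = x := hdm
  · have hq : 1 ≤ x / 2 ^ s := by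
      rcases Nat.eq_zero_or_pos (x / 2 ^ s) with h0 | h0
      · rw [h0] at hdm; omega
      · exact h0
    obtain ⟨q', hq'⟩ := Nat.exists_eq_add_of_le hq
    rw [hq'] at hdm ⊢
    calc 3 ^ cnum s (x % 2 ^ s) * (1 + q') + T^[s] (x % 2 ^ s)
        = 3 ^ cnum s (x % 2 ^ s) * q' + (3 ^ cnum s (x % 2 ^ s) + T^[s] (x % 2 ^ s)) := by ring
      _ < 2 ^ s * q' + (2 ^ s + x % 2 ^ s) :=
          Nat.add_lt_add_of_le_of_lt (Nat.mul_le_mul_right _ h1) h2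
      _ = 2 ^ s * (1 + q') + x % 2 ^ s := by ring
      _ = x := hdm

lemma Bcond_ge {s x : ℕ} (h : Bcond s (x % 2 ^ s)) : x ≤ T^[s] x := by
  obtain ⟨h1, h2⟩ := h
  have hdm : 2 ^ s * (x / 2 ^ s) + x % 2 ^ s = x := Nat.div_add_mod x (2 ^ s)
  have hk := keyIter s (x / 2 ^ s) (x % 2 ^ s)
  rw [hdm] at hk
  rw [hk]
  calc x = 2 ^ s * (x / 2 ^ s) + x % 2 ^ s := hdm.symm
    _ ≤ 3 ^ cnum s (x % 2 ^ s) * (x / 2 ^ s) + T^[s] (x % 2 ^ s) :=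
        Nat.add_le_add (Nat.mul_le_mul_right _ h1) h2

lemma certGood : ∀ r : ℕ, (r = 7 ∨ r = 15 ∨ r = 59) →
    (∀ s < 7, 1 ≤ s → Bcond s (r % 2 ^ s)) ∧ Acond 7 r := by
  rintro r (rfl | rfl | rfl) <;> refine ⟨?_, by decide⟩ <;> decide

lemma certBad : ∀ r < 128, ¬(r = 7 ∨ r = 15 ∨ r = 59) →
    (∃ s, s < 7 ∧ 1 ≤ s ∧ Acond s (r % 2 ^ s)) ∨ Bcond 7 r := by
  decide

lemma mod_pow_eq {x s : ℕ} (hs : s ≤ 7) : x % 2 ^ s = (x % 128) % 2 ^ s := by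
  have h128 : (128 : ℕ) = 2 ^ 7 := by norm_num
  rw [h128, Nat.mod_mod_of_dvd x (pow_dvd_pow 2 hs)]

lemma stop_spec {x n : ℕ} (h : stoppingTime x = n) (hn : n ≠ 0) :
    (1 ≤ n ∧ T^[n] x < x) ∧ ∀ m < n, ¬(1 ≤ m ∧ T^[m] x < x) := by
  have hne : {s : ℕ | 1 ≤ s ∧ T^[s] x < x}.Nonempty := by
    by_contra hemp
    rw [Set.not_nonempty_iff_eq_empty] at hemp
    rw [stoppingTime, hemp, Nat.sInf_empty] at h
    exact hn h.symm
  constructor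
  · have := Nat.sInf_mem hne
    rwa [show sInf {s : ℕ | 1 ≤ s ∧ T^[s] x < x} = n from h] at this
  · intro m hm hmem
    have := Nat.sInf_le (show m ∈ {s : ℕ | 1 ≤ s ∧ T^[s] x < x} from hmem)
    rw [show sInf {s : ℕ | 1 ≤ s ∧ T^[s] x < x} = n from h] at this
    omega

lemma stop_eq {x n : ℕ} (h1 : 1 ≤ n) (h2 : T^[n] x < x)
    (h3 : ∀ m < n, ¬(1 ≤ m ∧ T^[m] x < x)) : stoppingTime x = n := by
  have hmem : n ∈ {s : ℕ | 1 ≤ s ∧ T^[s] x < x} := ⟨h1, h2⟩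
  refine le_antisymm (Nat.sInf_le hmem) ?_
  by_contra hlt
  push_neg at hlt
  have hinf := Nat.sInf_mem ⟨n, hmem⟩
  exact h3 _ hlt hinf

theorem stmt19 (x : ℕ) (hx : 1 < x) :
    stoppingTime x = 7 ↔ (x % 128 = 7 ∨ x % 128 = 15 ∨ x % 128 = 59) := by
  constructor
  · intro h7
    by_contra hbad
    have hrlt : x % 128 < 128 := Nat.mod_lt _ (by norm_num)
    obtain ⟨⟨_, h7lt⟩, hmin⟩ := stop_spec h7 (by norm_num)
    rcases certBad (x % 128) hrlt hbad with ⟨s, hs7, hs1, hA⟩ | hB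
    · rw [← mod_pow_eq (by omega)] at hA
      exact hmin s hs7 ⟨hs1, Acond_lt hx hA⟩
    · have : x % 2 ^ 7 = x % 128 := (mod_pow_eq le_rfl).trans (by norm_num)
      rw [← this] at hB
      exact absurd h7lt (not_lt.mpr (Bcond_ge hB))
  · intro hr
    obtain ⟨hB, hA⟩ := certGood (x % 128) hr
    refine stop_eq (by norm_num) ?_ ?_
    · apply Acond_lt hx
      have : x % 2 ^ 7 = x % 128 := (mod_pow_eq le_rfl).trans (by norm_num)
      rwa [this]
    · rintro m hm ⟨hm1, hlt⟩
      have hBm : Bcond m (x % 2 ^ m) := by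
        rw [mod_pow_eq (by omega)]
        exact hB m hm hm1
      exact absurd hlt (not_lt.mpr (Bcond_ge hBm))
end
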